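/- arXiv:2006.06970 — 2 statements merged into one kernel-verified Lean document; each statement's English description precedes it below -/
import Mathlib

section
/- For all m ≥ 0 and n ≥ 1, A^m(n) − 1 = F_m·A(n) + F_{m−1}·n − F_{m+1}, where A^m denotes the m-fold iterate of A(n) = ⌊nφ⌋ (with the convention F_{−1} = 1 when m = 0). -/
noncomputable def phi : ℝ := (1 + Real.sqrt 5) / 2

/-- Lower Wythoff sequence. -/
noncomputable def A (n : ℕ) : ℕ := (⌊(n : ℝ) * phi⌋).toNat

/-- Upper Wythoff sequence. -/
noncomputable def B (n : ℕ) : ℕ := (⌊(n : ℝ) * phi ^ 2⌋).toNat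

/-- `d` is the digit sequence of the Zeckendorf expansion of `N`:
digits are 0/1, no two consecutive 1's, finitely many nonzero digits,
and `N = Σ dᵢ · F_{i+2}`. -/
def IsZeck (N : ℕ) (d : ℕ → ℕ) : Prop :=
  (∀ i, d i ≤ 1) ∧ (∀ i, ¬(d i = 1 ∧ d (i + 1) = 1)) ∧
  (Function.support d).Finite ∧ N = ∑ᶠ i, d i * Nat.fib (i + 2)

/-!
Write `x = kφ`. Since `φ² = φ + 1` and `kφ` is irrational for `k ≠ 0`,
`⌊x⌋φ = ⌊x⌋ + k - fract x · (φ - 1)` with `0 < fract x · (φ - 1) < 1`, so `A (A k) = A k + k - 1`.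
Hence `v m = A^[m] n - 1` satisfies the Fibonacci recurrence, which is solved by
`v (m + 1) = F_{m+1} v 1 + F_m v 0`.
-/

open Real goldenRatio

lemma phi_eq_goldenRatio : phi = φ := rfl

lemma A_cast (k : ℕ) : (A k : ℤ) = ⌊(k : ℝ) * φ⌋ := by
  rw [A, phi_eq_goldenRatio]
  exact Int.toNat_of_nonneg (Int.floor_nonneg.mpr (by positivity))

lemma le_A (k : ℕ) : k ≤ A k := by
  have : (k : ℝ) ≤ k * φ := le_mul_of_one_le_right k.cast_nonneg one_lt_goldenRatio.le
  have : (k : ℤ) ≤ A k := by rw [A_cast]; exact Int.le_floor.mpr (by exact_mod_cast this)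
  omega

lemma floor_floor_mul_goldenRatio_mul_goldenRatio {k : ℤ} (hk : k ≠ 0) :
    ⌊(⌊k * φ⌋ : ℝ) * φ⌋ = ⌊k * φ⌋ + k - 1 := by
  set x : ℝ := k * φ with hx
  have hfract : 0 < Int.fract x :=
    Int.fract_pos.mpr ((goldenRatio_irrational.intCast_mul hk).ne_int ⌊x⌋)
  have hxφ : x * φ = x + k := by rw [hx, mul_assoc, ← sq, goldenRatio_sq]; ring
  have key : (⌊x⌋ : ℝ) * φ = ⌊x⌋ + k - Int.fract x * (φ - 1) := by
    rw [← Int.self_sub_fract x]; linear_combination hxφ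
  have hlt : Int.fract x * (φ - 1) < 1 := by
    nlinarith [Int.fract_lt_one x, goldenRatio_lt_two, one_lt_goldenRatio]
  have hpos : 0 < Int.fract x * (φ - 1) := mul_pos hfract (by linarith [one_lt_goldenRatio])
  rw [Int.floor_eq_iff, key]
  push_cast
  constructor <;> linarith

lemma A_A_eq {k : ℕ} (hk : k ≠ 0) : (A (A k) : ℤ) = A k + k - 1 := by
  have h := floor_floor_mul_goldenRatio_mul_goldenRatio (Int.natCast_ne_zero.mpr hk)
  push_cast at h
  rw [A_cast (A k), A_cast k, ← h, ← A_cast k]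
  norm_cast

lemma A_iterate_ne_zero {n : ℕ} (hn : n ≠ 0) (m : ℕ) : A^[m] n ≠ 0 := by
  induction m with
  | zero => exact hn
  | succ m ih =>
    rw [Function.iterate_succ_apply']
    exact (Nat.pos_of_ne_zero ih |>.trans_le (le_A _)).ne'

lemma A_iterate_add_two {n : ℕ} (hn : n ≠ 0) (m : ℕ) :
    (A^[m + 2] n : ℤ) = A^[m + 1] n + A^[m] n - 1 := by
  simp only [Function.iterate_succ_apply']
  exact A_A_eq (A_iterate_ne_zero hn m)

lemma eq_fib_mul_of_add_two {R : Type*} [CommSemiring R] {v : ℕ → R}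
    (hv : ∀ m, v (m + 2) = v (m + 1) + v m) (m : ℕ) :
    v (m + 1) = Nat.fib (m + 1) * v 1 + Nat.fib m * v 0 := by
  induction m using Nat.twoStepInduction with
  | zero => simp
  | one => simp [hv 0]
  | more m ih₀ ih₁ =>
    rw [hv (m + 1), ih₁, ih₀]
    simp only [Nat.fib_add_two]
    push_cast
    ring

/-- A^m(n) − 1 = F_m·A(n) + F_{m−1}·n − F_{m+1}, with the convention F_{−1}=1 when m=0. -/
theorem iterate_A_sub_one (m n : ℕ) (hn : 1 ≤ n) :
    (A^[m] n : ℤ) - 1 =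
      Nat.fib m * (A n : ℤ) + (if m = 0 then 1 else (Nat.fib (m - 1) : ℤ)) * n
        - Nat.fib (m + 1) := by
  cases m with
  | zero => simp
  | succ k =>
    have hrec := eq_fib_mul_of_add_two (v := fun m => (A^[m] n : ℤ) - 1)
      (fun m => by rw [A_iterate_add_two (by omega) m]; ring) k
    simp only [Function.iterate_one, Function.iterate_zero_apply] at hrec
    rw [hrec, if_neg k.succ_ne_zero, Nat.add_sub_cancel, Nat.fib_add_two]
    push_cast
    ring
end

section
/- For all m ≥ 1 and n ≥ 1, A(B^m(A(n))) = F_{2m+2}·A(n) + F_{2m+1}·n − F_{2m+1}, where A(n) = ⌊nφ⌋ and B(n) = ⌊nφ²⌋. -/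
/-!
With `a = A k` and `f = kφ - a ∈ [0, 1)`, the relation `φ² = φ + 1` gives
`B k = k + a`, `(k + a)φ = (k + 2a) + f(2 - φ)` and `aφ + 1 = (a + k) + (1 - f(φ - 1))`.
Hence `A (B k) = A k + B k`, and, since `f > 0` for `k ≥ 1` by irrationality of `φ`,
`A (A k) = A k + k - 1`. So `k ↦ B k` acts on the pair `(A k, k)` by the matrix
`[[2, 1], [1, 1]]`, the square of the Fibonacci matrix, whose powers have Fibonacci entries.
-/

open Real

lemma phi_sq : phi ^ 2 = phi + 1 := goldenRatio_sq

lemma phi_pos : 0 < phi := goldenRatio_pos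

lemma one_lt_phi : 1 < phi := one_lt_goldenRatio

lemma phi_lt_two : phi < 2 := goldenRatio_lt_two

lemma A_eq_floor (k : ℕ) : A k = ⌊(k : ℝ) * phi⌋₊ := Int.floor_toNat _

lemma A_le_mul_phi (k : ℕ) : (A k : ℝ) ≤ k * phi := by
  rw [A_eq_floor]
  exact Nat.floor_le (mul_nonneg (Nat.cast_nonneg _) phi_pos.le)

lemma mul_phi_lt_A_add_one (k : ℕ) : (k : ℝ) * phi < A k + 1 := by
  rw [A_eq_floor]
  exact Nat.lt_floor_add_one _

lemma A_lt_mul_phi {k : ℕ} (hk : k ≠ 0) : (A k : ℝ) < k * phi := by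
  refine (A_le_mul_phi k).lt_of_ne fun h => ?_
  exact (goldenRatio_irrational.natCast_mul hk).ne_nat (A k) h.symm

lemma B_eq_add_A (k : ℕ) : B k = k + A k := by
  have hk : (k : ℝ) * phi ^ 2 = k * phi + k := by
    rw [phi_sq]; ring
  rw [B, Int.floor_toNat, hk, Nat.floor_add_natCast (mul_nonneg (Nat.cast_nonneg _) phi_pos.le),
    ← A_eq_floor, add_comm]

lemma A_B_eq (k : ℕ) : A (B k) = A k + B k := by
  set f := (k : ℝ) * phi - A k
  have hf0 : 0 ≤ f := sub_nonneg.mpr (A_le_mul_phi k)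
  have hf1 : f < 1 := by linarith [mul_phi_lt_A_add_one k]
  have hsplit : (B k : ℝ) * phi = (A k + B k : ℕ) + f * (2 - phi) := by
    rw [B_eq_add_A]; push_cast
    linear_combination (k : ℝ) * phi_sq
  rw [A_eq_floor, Nat.floor_eq_iff (mul_nonneg (Nat.cast_nonneg _) phi_pos.le), hsplit]
  constructor <;> nlinarith [one_lt_phi, phi_lt_two]

lemma A_A_add_one {k : ℕ} (hk : k ≠ 0) : A (A k) + 1 = A k + k := by
  set f := (k : ℝ) * phi - A k
  have hf0 : 0 < f := sub_pos.mpr (A_lt_mul_phi hk)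
  have hf1 : f < 1 := by linarith [mul_phi_lt_A_add_one k]
  have hsplit : (A k : ℝ) * phi + 1 = (A k + k : ℕ) + (1 - f * (phi - 1)) := by
    push_cast
    linear_combination (k : ℝ) * phi_sq
  have := phi_pos
  rw [A_eq_floor, ← Nat.floor_add_one (by positivity), Nat.floor_eq_iff (by positivity), hsplit]
  constructor <;> nlinarith [one_lt_phi, phi_lt_two]

lemma A_iterate_B_and_iterate_B_succ (x m : ℕ) :
    A (B^[m] x) = Nat.fib (2 * m + 1) * A x + Nat.fib (2 * m) * x ∧
      B^[m + 1] x = Nat.fib (2 * m + 2) * A x + Nat.fib (2 * m + 1) * x := by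
  induction m with
  | zero => simp [B_eq_add_A, add_comm]
  | succ m ih =>
    obtain ⟨hA, hB⟩ := ih
    have fib_2 : Nat.fib (2 * m + 2) = Nat.fib (2 * m) + Nat.fib (2 * m + 1) := Nat.fib_add_two
    have fib_3 : Nat.fib (2 * m + 3) = Nat.fib (2 * m + 1) + Nat.fib (2 * m + 2) :=
      Nat.fib_add_two
    have fib_4 : Nat.fib (2 * m + 4) = Nat.fib (2 * m + 2) + Nat.fib (2 * m + 3) :=
      Nat.fib_add_two
    have hA' : A (B^[m + 1] x) = Nat.fib (2 * m + 3) * A x + Nat.fib (2 * m + 2) * x := by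
      rw [Function.iterate_succ_apply', A_B_eq, ← Function.iterate_succ_apply' B, hA, hB, fib_3,
        fib_2]
      ring
    refine ⟨hA', ?_⟩
    show B^[m + 2] x = Nat.fib (2 * m + 4) * A x + Nat.fib (2 * m + 3) * x
    rw [Function.iterate_succ_apply', B_eq_add_A, hA', hB, fib_4, fib_3]
    ring

theorem A_iterate_B_A_formula_general (m n : ℕ) (hn : 1 ≤ n) :
    (A (B^[m] (A n)) : ℤ) =
      Nat.fib (2 * m + 2) * (A n : ℤ) + Nat.fib (2 * m + 1) * (n : ℤ)
        - Nat.fib (2 * m + 1) := by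
  have hAA : (A (A n) : ℤ) = A n + n - 1 := by
    have := A_A_add_one (Nat.one_le_iff_ne_zero.mp hn)
    omega
  rw [(A_iterate_B_and_iterate_B_succ (A n) m).1, Nat.fib_add_two]
  push_cast
  rw [hAA]
  ring

/-- A(B^m(A(n))) = F_{2m+2}·A(n) + F_{2m+1}·n − F_{2m+1} for m, n ≥ 1. -/
theorem A_iterate_B_A_formula (m n : ℕ) (hm : 1 ≤ m) (hn : 1 ≤ n) :
    (A (B^[m] (A n)) : ℤ) =
      Nat.fib (2 * m + 2) * (A n : ℤ) + Nat.fib (2 * m + 1) * (n : ℤ)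
        - Nat.fib (2 * m + 1) :=
  A_iterate_B_A_formula_general m n hn
end
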